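/- Let b* ∈ ℂ^{2N+1} be the 3-mode minimizer with b*_{-1} = b*_1 = √(3m/11), b*_0 = √(5m/11), zeros elsewhere. Then the gradient of H at b* satisfies ∇H(b*) = −(14m/11) b*, i.e., b* is an eigenvector of the gradient map with eigenvalue −14m/11. Moreover, for any η ∈ ℂ^{2N+1} with |b* + η|² = m, one has ⟨b*, η + conj(η)⟩ + |η|² = 0 and Re(∇H(b*)·η) = (7m/11)|η|². -/

import Mathlib

/-- The 3-mode minimizer of mass `m` centered at site `0`:
`b₋₁ = b₁ = √(3m/11)`, `b₀ = √(5m/11)`, zeros elsewhere. -/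
noncomputable def bstar (m : ℝ) : ℤ → ℂ := fun j =>
  if j = -1 ∨ j = 1 then ((Real.sqrt (3 * m / 11) : ℝ) : ℂ)
  else if j = 0 then ((Real.sqrt (5 * m / 11) : ℝ) : ℂ)
  else 0

/-- The gradient of `H` (with respect to the real inner product
`⟨u,v⟩ = Re Σ u_j conj(v_j)` on `ℂ^{2N+1} ≅ ℝ^{4N+2}`, i.e. `2 ∂H/∂conj(b_j)`):
`(∇H(b))_j = 2(|b_j|² b_j − 2 conj(b_j) b_{j-1}² − 2 b_{j+1}² conj(b_j))`. -/
noncomputable def gradH (b : ℤ → ℂ) (j : ℤ) : ℂ :=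
  2 * (((‖b j‖ : ℝ) : ℂ) ^ 2 * b j
    - 2 * (starRingEnd ℂ) (b j) * (b (j - 1)) ^ 2
    - 2 * (b (j + 1)) ^ 2 * (starRingEnd ℂ) (b j))

/-!
Every site of `b*` is real, and the local equation
`b_j (b_j² − 2b_{j-1}² − 2b_{j+1}²) = −(7m/11) b_j` holds at `j = ±1` (`3 − 10 = −7`)
and at `j = 0` (`5 − 6 − 6 = −7`), so `∇H(b*) = λ b*` with `λ = −14m/11`.
For a real vector `b`, `Re Σ λ b_j η_j = (λ/2) ⟨b, η + conj η⟩`, and expanding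
`|b + η|² = |b|²` gives `⟨b, η + conj η⟩ = −|η|²`; together `Re(∇H(b*)·η) = −(λ/2)|η|²`.
-/

open Finset ComplexConjugate

section RealVector

variable {ι : Type*} (s : Finset ι) {b η : ι → ℂ}

lemma sq_norm_add_of_im_eq_zero {z : ℂ} (hz : z.im = 0) (w : ℂ) :
    ‖z + w‖ ^ 2 = ‖z‖ ^ 2 + (z * conj (w + conj w)).re + ‖w‖ ^ 2 := by
  simp only [Complex.sq_norm, Complex.normSq_apply, Complex.mul_re, Complex.add_re,
    Complex.add_im, Complex.conj_re, Complex.conj_im, hz]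
  ring

lemma re_sum_mul_conj_add_sum_sq_norm_eq_zero (hb : ∀ i, (b i).im = 0)
    (hmass : ∑ i ∈ s, ‖b i + η i‖ ^ 2 = ∑ i ∈ s, ‖b i‖ ^ 2) :
    (∑ i ∈ s, b i * conj (η i + conj (η i))).re + ∑ i ∈ s, ‖η i‖ ^ 2 = 0 := by
  simp only [sq_norm_add_of_im_eq_zero (hb _), sum_add_distrib] at hmass
  rw [Complex.re_sum]
  linarith

lemma re_sum_mul_of_eq_smul {g : ι → ℂ} {μ : ℝ} (hb : ∀ i, (b i).im = 0)
    (hg : ∀ i, g i = μ * b i) :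
    (∑ i ∈ s, g i * η i).re = μ / 2 * (∑ i ∈ s, b i * conj (η i + conj (η i))).re := by
  simp only [Complex.re_sum, mul_sum, hg]
  refine sum_congr rfl fun i _ => ?_
  simp only [Complex.mul_re, Complex.mul_im, Complex.add_re, Complex.add_im, Complex.conj_re,
    Complex.conj_im, Complex.ofReal_re, Complex.ofReal_im, hb i]
  ring

end RealVector

lemma gradH_of_im_eq_zero (b : ℤ → ℂ) {j : ℤ} (hj : (b j).im = 0) :
    gradH b j = 2 * b j * (b j ^ 2 - 2 * b (j - 1) ^ 2 - 2 * b (j + 1) ^ 2) := by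
  have hconj : conj (b j) = b j := Complex.conj_eq_iff_im.mpr hj
  have hnorm : ((‖b j‖ : ℝ) : ℂ) ^ 2 = b j ^ 2 := by
    rw [← Complex.mul_conj', hconj, sq]
  rw [gradH, hnorm, hconj]
  ring

lemma bstar_im (m : ℝ) (j : ℤ) : (bstar m j).im = 0 := by
  unfold bstar
  split_ifs <;> simp

section Minimizer

variable {m : ℝ}

lemma bstar_eq_zero {j : ℤ} (hj : j ∉ ({-1, 0, 1} : Finset ℤ)) : bstar m j = 0 := by
  simp only [mem_insert, mem_singleton, not_or] at hj
  simp [bstar, hj.1, hj.2.1, hj.2.2]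

lemma bstar_neg_one : bstar m (-1) = (√(3 * m / 11) : ℂ) := by simp [bstar]

lemma bstar_zero : bstar m 0 = (√(5 * m / 11) : ℂ) := by simp [bstar]

lemma bstar_one : bstar m 1 = (√(3 * m / 11) : ℂ) := by simp [bstar]

lemma gradH_bstar (hm : 0 ≤ m) (j : ℤ) :
    gradH (bstar m) j = ((-(14 * m / 11) : ℝ) : ℂ) * bstar m j := by
  have h3 : (√(3 * m / 11) : ℂ) ^ 2 = 3 * m / 11 := by
    rw [← Complex.ofReal_pow, Real.sq_sqrt (by positivity)]; push_cast; ring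
  have h5 : (√(5 * m / 11) : ℂ) ^ 2 = 5 * m / 11 := by
    rw [← Complex.ofReal_pow, Real.sq_sqrt (by positivity)]; push_cast; ring
  rw [gradH_of_im_eq_zero _ (bstar_im m j)]
  by_cases hj : j ∈ ({-1, 0, 1} : Finset ℤ)
  · simp only [mem_insert, mem_singleton] at hj
    rcases hj with rfl | rfl | rfl
    · rw [show (-1 : ℤ) - 1 = -2 by norm_num, show (-1 : ℤ) + 1 = 0 by norm_num,
        bstar_eq_zero (j := -2) (by decide), bstar_neg_one, bstar_zero]
      push_cast
      linear_combination 2 * (√(3 * m / 11) : ℂ) * (h3 - 2 * h5)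
    · rw [show (0 : ℤ) - 1 = -1 by norm_num, zero_add, bstar_neg_one, bstar_zero, bstar_one]
      push_cast
      linear_combination 2 * (√(5 * m / 11) : ℂ) * (h5 - 4 * h3)
    · rw [sub_self, show (1 : ℤ) + 1 = 2 by norm_num, bstar_eq_zero (j := 2) (by decide),
        bstar_zero, bstar_one]
      push_cast
      linear_combination 2 * (√(3 * m / 11) : ℂ) * (h3 - 2 * h5)
  · simp [bstar_eq_zero hj]

lemma sum_sq_norm_bstar (hm : 0 ≤ m) {N : ℕ} (hN : 1 ≤ N) :
    ∑ j ∈ Icc (-(N : ℤ)) N, ‖bstar m j‖ ^ 2 = m := by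
  have hsub : ({-1, 0, 1} : Finset ℤ) ⊆ Icc (-(N : ℤ)) N := by
    intro j hj
    simp only [mem_insert, mem_singleton] at hj
    rw [mem_Icc]
    omega
  rw [← sum_subset hsub fun j _ hj => by simp [bstar_eq_zero hj], sum_insert (by decide),
    sum_insert (by decide), sum_singleton, bstar_neg_one, bstar_zero, bstar_one]
  simp only [Complex.norm_real, Real.norm_eq_abs, sq_abs,
    Real.sq_sqrt (by positivity : 0 ≤ 3 * m / 11), Real.sq_sqrt (by positivity : 0 ≤ 5 * m / 11)]
  ring

end Minimizer

/-- At the 3-mode minimizer, `∇H(b*) = −(14m/11) b*`; moreover, for any perturbation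
`η` keeping the mass equal to `m`, `⟨b*, η + conj η⟩ + |η|² = 0` and
`Re(∇H(b*)·η) = (7m/11)|η|²`. -/
theorem gradH_at_minimizer (N : ℕ) (hN : 2 ≤ N) (m : ℝ) (hm : 0 < m) :
    (∀ j : ℤ, gradH (bstar m) j = ((-(14 * m / 11) : ℝ) : ℂ) * bstar m j) ∧
    (∀ η : ℤ → ℂ, (∀ j : ℤ, j ∉ Finset.Icc (-(N : ℤ)) (N : ℤ) → η j = 0) →
      (∑ j ∈ Finset.Icc (-(N : ℤ)) (N : ℤ), (‖bstar m j + η j‖) ^ 2) = m →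
      ((∑ j ∈ Finset.Icc (-(N : ℤ)) (N : ℤ),
          bstar m j * (starRingEnd ℂ) (η j + (starRingEnd ℂ) (η j))).re
        + ∑ j ∈ Finset.Icc (-(N : ℤ)) (N : ℤ), (‖η j‖) ^ 2 = 0) ∧
      ((∑ j ∈ Finset.Icc (-(N : ℤ)) (N : ℤ), gradH (bstar m) j * η j).re
        = (7 * m / 11) * ∑ j ∈ Finset.Icc (-(N : ℤ)) (N : ℤ), (‖η j‖) ^ 2)) := by
  have hgrad := gradH_bstar hm.le
  refine ⟨hgrad, fun η _ hmass => ?_⟩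
  have hlin := re_sum_mul_conj_add_sum_sq_norm_eq_zero (Icc (-(N : ℤ)) N) (bstar_im m)
    (hmass.trans (sum_sq_norm_bstar hm.le (by omega)).symm)
  refine ⟨hlin, ?_⟩
  rw [re_sum_mul_of_eq_smul _ (bstar_im m) hgrad]
  linear_combination (-(7 * m / 11)) * hlin
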